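/- For every (t,ρ,x) ∈ (0,∞) × ℝ^m × ∂Δ with t < b(x,ρ), there exists a unique s ∈ (0,1) with B(s,ρ,x) = t. Denoting this value by h(t,ρ,x), for each fixed (ρ,x) the function t ↦ h(t,ρ,x) is strictly increasing on (0, b(x,ρ)). -/

import Mathlib

open MeasureTheory Real Filter Set

noncomputable section

/-- The unit simplex Δ in ℝ^m. -/
def simplex (m : ℕ) : Set (Fin m → ℝ) :=
  {l | (∀ i, 0 ≤ l i) ∧ ∑ i, l i ≤ 1}

/-- ⟨λ̂, log λ̂⟩ = Σ_{i=0}^m λ_i log λ_i, with λ_0 = 1 - Σ λ_i.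
Note `Real.log 0 = 0`, so the convention 0·log 0 = 0 holds. -/
def ent (m : ℕ) (l : Fin m → ℝ) : ℝ :=
  (1 - ∑ i, l i) * Real.log (1 - ∑ i, l i) + ∑ i, l i * Real.log (l i)

/-- b(λ,ρ) = log(1+|e^ρ|) + Σ_{i=0}^m (λ_i log λ_i − ρ_i λ_i), where ρ_0 = 0. -/
def bfun (m : ℕ) (l ρ : Fin m → ℝ) : ℝ :=
  Real.log (1 + ∑ i, Real.exp (ρ i)) + ent m l - ∑ i, ρ i * l i

/-- μ(ρ) : μ_i(ρ) = e^{ρ_i}/(1+|e^ρ|) for i = 1,…,m. -/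
def mu (m : ℕ) (ρ : Fin m → ℝ) : Fin m → ℝ :=
  fun i => Real.exp (ρ i) / (1 + ∑ j, Real.exp (ρ j))

/-- B(s,ρ,x) = b((1−s)μ(ρ) + s x, ρ). -/
def Bfun (m : ℕ) (s : ℝ) (ρ x : Fin m → ℝ) : ℝ :=
  bfun m (fun i => (1 - s) * mu m ρ i + s * x i) ρ

/-- D(t,ρ) = m!·vol({λ ∈ Δ : b(λ,ρ) ≤ t}). -/
def Dfun (m : ℕ) (t : ℝ) (ρ : Fin m → ℝ) : ℝ :=
  (m.factorial : ℝ) * (volume {l ∈ simplex m | bfun m l ρ ≤ t}).toReal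

/-- F_n(ρ) = ∫_{Δ^n} max_j [⟨ρ,λ^j⟩ − ⟨λ̂^j, log λ̂^j⟩] dλ^1⋯dλ^n, each dλ^j = m!·Lebesgue. -/
def Fn (m n : ℕ) (ρ : Fin m → ℝ) : ℝ :=
  ((m.factorial : ℝ)) ^ n *
    ∫ L in {L : Fin n → Fin m → ℝ | ∀ j, L j ∈ simplex m},
      ⨆ j, (∑ i, ρ i * L j i - ent m (L j))

/-- Partial derivative in the variable ρ_p. -/
def pderivR (m : ℕ) (p : Fin m) (f : (Fin m → ℝ) → ℝ) (ρ : Fin m → ℝ) : ℝ :=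
  deriv (fun r => f (Function.update ρ p r)) (ρ p)

/-- H = {(t,ρ,x) ∈ (0,∞) × ℝ^m × ∂Δ : t < b(x,ρ)}. -/
def Hset (m : ℕ) : Set (ℝ × (Fin m → ℝ) × (Fin m → ℝ)) :=
  {q | q.2.2 ∈ frontier (simplex m) ∧ 0 < q.1 ∧ q.1 < bfun m q.2.2 q.2.1}

/-!
`B(·,ρ,x)` is the restriction of `b(·,ρ)`, which is convex on `Δ` (entropy plus an affine
function), to the segment from `μ(ρ)` to `x`. So it is convex and continuous on `[0,1]`, with
`B(0,ρ,x) = b(μ(ρ),ρ) = 0` (the equality case of Gibbs' inequality) and `B(1,ρ,x) = b(x,ρ)`.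
A convex function vanishing at `0` has nondecreasing slope `f(s)/s`, hence
`f(s₁) ≤ (s₁/s₂) f(s₂) < f(s₂)` for `0 < s₁ < s₂` with `f(s₂) > 0`: it is strictly increasing
where it is positive. The intermediate value theorem gives the solution of `B(s,ρ,x) = t`, and
`h(·,ρ,x)` is the inverse of a strictly increasing function.
-/

section ConvexThroughOrigin

variable {s : Set ℝ} {f : ℝ → ℝ}

theorem ConvexOn.strictMonoOn_of_map_zero (hf : ConvexOn ℝ s f) (h0 : (0 : ℝ) ∈ s)
    (hf0 : f 0 = 0) : StrictMonoOn f {x ∈ s | 0 ≤ x ∧ 0 < f x} := by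
  rintro x ⟨hxs, hx0, hfx⟩ y ⟨hys, -, hfy⟩ hxy
  have hx : 0 < x := hx0.lt_of_ne (by rintro rfl; exact hfx.ne' hf0)
  have hy : 0 < y := hx.trans hxy
  have hslope : f x / x ≤ f y / y := by
    simpa [hf0] using hf.secant_mono h0 hxs hys hx.ne' hy.ne' hxy.le
  calc f x = x * (f x / x) := by field_simp
    _ ≤ x * (f y / y) := by gcongr
    _ < y * (f y / y) := by gcongr
    _ = f y := by field_simp

variable (hf : ConvexOn ℝ (Icc 0 1) f) (hf0 : f 0 = 0)
include hf hf0

theorem ConvexOn.strictMonoOn_Ioo_of_map_zero :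
    StrictMonoOn f {x ∈ Ioo 0 1 | 0 < f x} :=
  (hf.strictMonoOn_of_map_zero (left_mem_Icc.2 zero_le_one) hf0).mono
    fun _ ⟨hx, hfx⟩ => ⟨Ioo_subset_Icc_self hx, hx.1.le, hfx⟩

theorem ConvexOn.existsUnique_eq_of_map_zero (hc : ContinuousOn f (Icc 0 1)) {t : ℝ}
    (ht : 0 < t) (ht1 : t < f 1) : ∃! x : ℝ, x ∈ Ioo (0 : ℝ) 1 ∧ f x = t := by
  obtain ⟨x, hx, hfx⟩ := intermediate_value_Ioo zero_le_one hc (by rw [hf0]; exact ⟨ht, ht1⟩)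
  refine ⟨x, ⟨hx, hfx⟩, fun y ⟨hy, hfy⟩ => ?_⟩
  exact (hf.strictMonoOn_Ioo_of_map_zero hf0).injOn ⟨hy, hfy ▸ ht⟩ ⟨hx, hfx ▸ ht⟩ (hfy.trans hfx.symm)

theorem ConvexOn.strictMonoOn_of_rightInvOn {g : ℝ → ℝ}
    (hg : ∀ t ∈ Ioo 0 (f 1), g t ∈ Ioo 0 1 ∧ f (g t) = t) : StrictMonoOn g (Ioo 0 (f 1)) := by
  intro t ht u hu htu
  have hmem : ∀ t ∈ Ioo 0 (f 1), g t ∈ {x ∈ Ioo 0 1 | 0 < f x} := fun t ht =>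
    ⟨(hg t ht).1, by rw [(hg t ht).2]; exact ht.1⟩
  rwa [← (hf.strictMonoOn_Ioo_of_map_zero hf0).lt_iff_lt (hmem t ht) (hmem u hu),
    (hg t ht).2, (hg u hu).2]

end ConvexThroughOrigin

theorem ConvexOn.finset_sum {𝕜 E ι : Type*} [Field 𝕜] [LinearOrder 𝕜] [IsStrictOrderedRing 𝕜]
    [AddCommGroup E] [Module 𝕜 E] {s : Set E} (hs : Convex 𝕜 s) (t : Finset ι)
    {f : ι → E → 𝕜} (hf : ∀ i ∈ t, ConvexOn 𝕜 s (f i)) : ConvexOn 𝕜 s (∑ i ∈ t, f i) :=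
  Finset.sum_induction f (ConvexOn 𝕜 s) (fun _ _ => ConvexOn.add) (convexOn_const 0 hs) hf

theorem convex_simplex (m : ℕ) : Convex ℝ (simplex m) := by
  rintro l ⟨hl0, hl1⟩ k ⟨hk0, hk1⟩ a b ha hb hab
  refine ⟨fun i => ?_, ?_⟩
  · simp only [Pi.add_apply, Pi.smul_apply, smul_eq_mul]
    have := hl0 i; have := hk0 i; positivity
  · simp only [Pi.add_apply, Pi.smul_apply, smul_eq_mul, Finset.sum_add_distrib,
      ← Finset.mul_sum]
    nlinarith

theorem isClosed_simplex (m : ℕ) : IsClosed (simplex m) := by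
  simp only [simplex, ofPred_and, ofPred_forall]
  exact (isClosed_iInter fun i => isClosed_le continuous_const (continuous_apply i)).inter
    (isClosed_le (continuous_finsetSum _ fun i _ => continuous_apply i) continuous_const)

theorem convexOn_ent (m : ℕ) : ConvexOn ℝ (simplex m) (ent m) := by
  let rest : (Fin m → ℝ) →ᵃ[ℝ] ℝ :=
    AffineMap.const ℝ _ 1 - (∑ i, LinearMap.proj i : (Fin m → ℝ) →ₗ[ℝ] ℝ).toAffineMap
  have hent : ent m = (fun y => y * log y) ∘ rest +
      ∑ i, (fun y => y * log y) ∘ LinearMap.proj (R := ℝ) (φ := fun _ : Fin m => ℝ) i := by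
    ext l
    simp [ent, rest]
  rw [hent]
  refine ConvexOn.add ?_ (ConvexOn.finset_sum (convex_simplex m) _ fun i _ => ?_)
  · refine (convexOn_mul_log.comp_affineMap rest).subset (fun l hl => ?_) (convex_simplex m)
    simpa [rest] using hl.2
  · exact (convexOn_mul_log.comp_linearMap _).subset (fun l hl => hl.1 i) (convex_simplex m)

theorem continuous_ent (m : ℕ) : Continuous (ent m) := by
  unfold ent
  fun_prop

theorem convexOn_bfun (m : ℕ) (ρ : Fin m → ℝ) :
    ConvexOn ℝ (simplex m) fun l => bfun m l ρ := by
  have h := ((convexOn_ent m).add_const (log (1 + ∑ i, exp (ρ i)))).sub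
    ((Fintype.linearCombination ℝ ρ).concaveOn (convex_simplex m))
  refine h.congr fun l _ => ?_
  simp [bfun, Fintype.linearCombination_apply, mul_comm]
  ring

section Gibbs

variable (m : ℕ) (ρ : Fin m → ℝ)

theorem one_sub_sum_mu : 1 - ∑ i, mu m ρ i = (1 + ∑ j, exp (ρ j))⁻¹ := by
  have hZ : 0 < 1 + ∑ j, exp (ρ j) := by positivity
  simp only [mu, ← Finset.sum_div]
  field_simp
  ring

theorem mu_mem_simplex : mu m ρ ∈ simplex m := by
  refine ⟨fun i => by unfold mu; positivity, ?_⟩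
  have := one_sub_sum_mu m ρ
  have : 0 < (1 + ∑ j, exp (ρ j))⁻¹ := by positivity
  linarith

theorem bfun_mu : bfun m (mu m ρ) ρ = 0 := by
  have hsum : ∑ i, mu m ρ i = 1 - (1 + ∑ j, exp (ρ j))⁻¹ := by rw [← one_sub_sum_mu]; ring
  unfold bfun ent
  rw [one_sub_sum_mu]
  set Z := 1 + ∑ j, exp (ρ j)
  have hZ : 0 < Z := by positivity
  have hlog : ∀ i, log (mu m ρ i) = ρ i - log Z := fun i => by
    rw [mu, log_div (exp_ne_zero _) hZ.ne', log_exp]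
  have hent : ∑ i, mu m ρ i * (ρ i - log Z) = ∑ i, ρ i * mu m ρ i - (1 - Z⁻¹) * log Z := by
    rw [← hsum, Finset.sum_mul, ← Finset.sum_sub_distrib]
    exact Finset.sum_congr rfl fun i _ => by ring
  simp only [log_inv, hlog, hent]
  ring

end Gibbs

theorem Bfun_eq_bfun_lineMap (m : ℕ) (s : ℝ) (ρ x : Fin m → ℝ) :
    Bfun m s ρ x = bfun m (AffineMap.lineMap (mu m ρ) x s) ρ := by
  rw [Bfun, AffineMap.lineMap_apply_module]
  rfl

section Segment

variable (m : ℕ) (ρ x : Fin m → ℝ)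

theorem Bfun_zero : Bfun m 0 ρ x = 0 := by
  rw [Bfun_eq_bfun_lineMap, AffineMap.lineMap_apply_zero, bfun_mu]

theorem Bfun_one : Bfun m 1 ρ x = bfun m x ρ := by
  rw [Bfun_eq_bfun_lineMap, AffineMap.lineMap_apply_one]

theorem continuous_Bfun : Continuous fun s => Bfun m s ρ x := by
  simp only [Bfun_eq_bfun_lineMap, bfun]
  have := continuous_ent m
  fun_prop

theorem convexOn_Bfun (hx : x ∈ simplex m) : ConvexOn ℝ (Icc 0 1) fun s => Bfun m s ρ x := by
  simp only [Bfun_eq_bfun_lineMap]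
  exact ((convexOn_bfun m ρ).comp_affineMap _).subset
    (fun _ hs => (convex_simplex m).lineMap_mem (mu_mem_simplex m ρ) hx hs) (convex_Icc 0 1)

end Segment

theorem h_exists_unique_strictMono_general (m : ℕ) (ρ : Fin m → ℝ)
    (x : Fin m → ℝ) (hx : x ∈ frontier (simplex m)) :
    (∀ t : ℝ, 0 < t → t < bfun m x ρ →
      ∃! s : ℝ, s ∈ Set.Ioo (0 : ℝ) 1 ∧ Bfun m s ρ x = t) ∧
    ∀ h : ℝ → ℝ,
      (∀ t : ℝ, 0 < t → t < bfun m x ρ →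
        h t ∈ Set.Ioo (0 : ℝ) 1 ∧ Bfun m (h t) ρ x = t) →
      StrictMonoOn h (Set.Ioo 0 (bfun m x ρ)) := by
  have hconv := convexOn_Bfun m ρ x ((isClosed_simplex m).frontier_subset hx)
  rw [← Bfun_one m ρ x]
  refine ⟨fun t ht ht1 => ?_, fun h hh => ?_⟩
  · exact hconv.existsUnique_eq_of_map_zero (Bfun_zero m ρ x)
      (continuous_Bfun m ρ x).continuousOn ht ht1
  · exact hconv.strictMonoOn_of_rightInvOn (Bfun_zero m ρ x) fun t ht => hh t ht.1 ht.2

/-- for 0 < t < b(x,ρ) there is a unique s ∈ (0,1) with B(s,ρ,x) = t,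
and the resulting function h(·,ρ,x) is strictly increasing on (0, b(x,ρ)). -/
theorem h_exists_unique_strictMono (m : ℕ) (hm : 1 ≤ m) (ρ : Fin m → ℝ)
    (x : Fin m → ℝ) (hx : x ∈ frontier (simplex m)) :
    (∀ t : ℝ, 0 < t → t < bfun m x ρ →
      ∃! s : ℝ, s ∈ Set.Ioo (0 : ℝ) 1 ∧ Bfun m s ρ x = t) ∧
    ∀ h : ℝ → ℝ,
      (∀ t : ℝ, 0 < t → t < bfun m x ρ →
        h t ∈ Set.Ioo (0 : ℝ) 1 ∧ Bfun m (h t) ρ x = t) →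
      StrictMonoOn h (Set.Ioo 0 (bfun m x ρ)) :=
  h_exists_unique_strictMono_general m ρ x hx
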